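/- arXiv:math/0608125 — 2 statements merged into one kernel-verified Lean document; each statement's English description precedes it below -/
import Mathlib

section
/- Let S be a grope frame, m ≤ n, and V ∈ W(E_n) a reduced word. Then V ∈ F_m (i.e. the element of F_n represented by V lies in the image of e_{m,n}) if and only if there exists a word W ∈ W(E_m) such that e_{m,n}[W] ≡ V. -/
/-! Basic definitions for grope groups, following Cencelj–Eda–Vavpetič,
"Rigidity of the minimal grope group". -/

/-- A *grope frame* is a set `S` of finite sequences of natural numbers containing the
empty sequence and such that for every `s ∈ S` there is `n > 0` with
`{i | s ++ [i] ∈ S} = {0, …, 2n - 1}`. -/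
structure GropeFrame where
  S : Set (List ℕ)
  nil_mem : [] ∈ S
  branch : ∀ s ∈ S, ∃ n : ℕ, 0 < n ∧ {i : ℕ | s ++ [i] ∈ S} = Set.Iio (2 * n)

namespace GropeFrame

/-- The number of children of a sequence `s` in the frame. -/
noncomputable def deg (G : GropeFrame) (s : List ℕ) : ℕ :=
  sInf {i : ℕ | s ++ [i] ∉ G.S}

theorem deg_eq (G : GropeFrame) {s : List ℕ} {n : ℕ}
    (hn : {i : ℕ | s ++ [i] ∈ G.S} = Set.Iio (2 * n)) : G.deg s = 2 * n := by
  have hc : {i : ℕ | s ++ [i] ∉ G.S} = Set.Ici (2 * n) := by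
    ext i
    have h := Set.ext_iff.1 hn i
    simp only [Set.mem_setOf_eq, Set.mem_Iio] at h
    simp [Set.mem_Ici, h, not_lt]
  rw [deg, hc, csInf_Ici]

theorem mem_of_lt_deg (G : GropeFrame) {s : List ℕ} (hs : s ∈ G.S) {i : ℕ}
    (hi : i < G.deg s) : s ++ [i] ∈ G.S := by
  obtain ⟨n, -, hn⟩ := G.branch s hs
  rw [G.deg_eq hn] at hi
  exact (Set.ext_iff.1 hn i).2 hi

/-- `s` is binary branched in the frame `G` if its set of children indices is `{0, 1}`. -/
def BinaryBranched (G : GropeFrame) (s : List ℕ) : Prop :=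
  {i : ℕ | s ++ [i] ∈ G.S} = {0, 1}

end GropeFrame

/-- The set `E_m` of free generators `c_s`, `s ∈ S`, `lh s = m`, of the free group `F_m`. -/
abbrev GropeGen (G : GropeFrame) (m : ℕ) : Type :=
  {s : List ℕ // s ∈ G.S ∧ s.length = m}

/-- The generator `c_{s i}` obtained by appending `i` to `s`. -/
def gropeChild {G : GropeFrame} {m : ℕ} (x : GropeGen G m) (i : ℕ)
    (hi : i < G.deg x.1) : GropeGen G (m + 1) :=
  ⟨x.1 ++ [i], ⟨G.mem_of_lt_deg x.2.1 hi, by simp [x.2.2]⟩⟩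

open scoped commutatorElement

/-- The bonding homomorphism `e_m : F_m → F_{m+1}`, sending `c_s` to
`[c_{s0}, c_{s1}] ⋯ [c_{s(2k-2)}, c_{s(2k-1)}]`. -/
noncomputable def gropeE (G : GropeFrame) (m : ℕ) :
    FreeGroup (GropeGen G m) →* FreeGroup (GropeGen G (m + 1)) :=
  FreeGroup.lift fun x =>
    (List.ofFn fun j : Fin (G.deg x.1 / 2) =>
      ⁅FreeGroup.of (gropeChild x (2 * (j : ℕ)) (by have := j.isLt; omega)),
        FreeGroup.of (gropeChild x (2 * (j : ℕ) + 1) (by have := j.isLt; omega))⁆).prod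

/-- The composite `e_{m,n} = e_{n-1} ∘ ⋯ ∘ e_m : F_m → F_n`. -/
noncomputable def gropeEle (G : GropeFrame) {m n : ℕ} (h : m ≤ n)
    (x : FreeGroup (GropeGen G m)) : FreeGroup (GropeGen G n) :=
  Nat.leRecOn (C := fun k => FreeGroup (GropeGen G k)) h
    (fun {k} y => gropeE G k y) x

/-- For `v ∈ F_n`, `MemF G m v` says that `v` lies in (the image of) `F_m`,
i.e. in the image of `e_{m,n}`. -/
def MemF (G : GropeFrame) (m : ℕ) {n : ℕ} (v : FreeGroup (GropeGen G n)) : Prop :=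
  ∃ (h : m ≤ n) (x : FreeGroup (GropeGen G m)), gropeEle G h x = v

/-- The formal inverse `W⁻` of a word. -/
def wordInv {α : Type*} (w : List (α × Bool)) : List (α × Bool) :=
  (w.map fun p => (p.1, !p.2)).reverse

/-- A word is reduced if no letter is adjacent to its formal inverse. -/
def IsReducedWord {α : Type*} (w : List (α × Bool)) : Prop :=
  w.Chain' fun a b => ¬(a.1 = b.1 ∧ b.2 = !a.2)

/-- A word is cyclically reduced if it is reduced and moreover its first and last letters
are not mutually inverse. -/
def IsCyclicallyReducedWord {α : Type*} (w : List (α × Bool)) : Prop :=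
  IsReducedWord w ∧ ∀ a b : α × Bool, w.getLast? = some a → w.head? = some b →
    ¬(a.1 = b.1 ∧ b.2 = !a.2)

/-- Expansion of a single letter: `c_t` is replaced by
`c_{t0} c_{t1} c_{t0}⁻ c_{t1}⁻ ⋯ c_{t(2k-2)} c_{t(2k-1)} c_{t(2k-2)}⁻ c_{t(2k-1)}⁻` and
`c_t⁻` by the formal inverse of this word. -/
noncomputable def letterExp (G : GropeFrame) {m : ℕ} (a : GropeGen G m × Bool) :
    List (GropeGen G (m + 1) × Bool) :=
  let P : List (GropeGen G (m + 1) × Bool) :=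
    (List.ofFn fun j : Fin (G.deg a.1.1 / 2) =>
      [(gropeChild a.1 (2 * (j : ℕ)) (by have := j.isLt; omega), true),
       (gropeChild a.1 (2 * (j : ℕ) + 1) (by have := j.isLt; omega), true),
       (gropeChild a.1 (2 * (j : ℕ)) (by have := j.isLt; omega), false),
       (gropeChild a.1 (2 * (j : ℕ) + 1) (by have := j.isLt; omega), false)]).flatten
  if a.2 then P else wordInv P

/-- The word `e_{m,n}[W]` obtained from `W ∈ W(E_m)` by iterated letter expansion. -/
noncomputable def wordExp (G : GropeFrame) {m n : ℕ} (h : m ≤ n)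
    (w : List (GropeGen G m × Bool)) : List (GropeGen G n × Bool) :=
  Nat.leRecOn (C := fun k => List (GropeGen G k × Bool)) h
    (fun {k} v => (v.map (letterExp G)).flatten) w

/-- `IsSmall G hmn W V` : the subword `V` of the reduced word `W ∈ W(E_n)` (where
`W ∈ F_m`, with `W ≡ e_{m,n}[W₀]`) is *small*, i.e. there are a letter `c` occurring in
`W₀` and `i ∈ ℕ` such that `V` is a subword of `e_{m+1,n}[c_{si}]` (resp. of
`e_{m+1,n}[c_{si}⁻]` when the occurring letter is negative). -/
def IsSmall (G : GropeFrame) {m n : ℕ} (hmn : m < n)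
    (W V : List (GropeGen G n × Bool)) : Prop :=
  ∃ W₀ : List (GropeGen G m × Bool), wordExp G hmn.le W₀ = W ∧
    ∃ c ∈ W₀, ∃ (i : ℕ) (hi : i < G.deg c.1.1),
      V <:+: wordExp G (Nat.succ_le_of_lt hmn) [(gropeChild c.1 i hi, c.2)]

/-! The letter expansion realises `e_m` on words and sends reduced words to reduced words.
Since reduced words are the normal forms of a free group, a reduced word representing
`e_{m,n}(x)` must then be the expansion of the reduced word of `x`. -/

namespace FreeGroup

variable {α : Type*}

theorem IsReduced.eq_of_mk_eq {L₁ L₂ : List (α × Bool)} (h₁ : IsReduced L₁)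
    (h₂ : IsReduced L₂) (h : mk L₁ = mk L₂) : L₁ = L₂ := by
  classical
  rw [← h₁.reduce_eq, ← h₂.reduce_eq]
  exact reduce.sound h

theorem mk_flatten (L : List (List (α × Bool))) : mk L.flatten = (L.map mk).prod := by
  induction L with
  | nil => rfl
  | cons l L ih => rw [List.flatten_cons, ← mul_mk, ih, List.map_cons, List.prod_cons]

theorem commutatorElement_of_of (x y : α) :
    ⁅of x, of y⁆ = mk [(x, true), (y, true), (x, false), (y, false)] := by
  rw [commutatorElement_def, of, of, inv_mk, inv_mk, mul_mk, mul_mk, mul_mk]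
  rfl

theorem isChain_invRev {w : List (α × Bool)}
    (hw : w.IsChain (fun p q => p.1 ≠ q.1)) :
    (invRev w).IsChain (fun p q => p.1 ≠ q.1) := by
  rw [invRev, List.isChain_reverse, List.isChain_map]
  exact hw.imp fun {_ _} h => Ne.symm h

theorem head?_invRev (w : List (α × Bool)) :
    (invRev w).head? = w.getLast?.map fun p => (p.1, !p.2) := by
  rw [invRev, List.head?_reverse, List.getLast?_map]

theorem getLast?_invRev (w : List (α × Bool)) :
    (invRev w).getLast? = w.head?.map fun p => (p.1, !p.2) := by
  rw [invRev, List.getLast?_reverse, List.head?_map]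

end FreeGroup

theorem isReducedWord_iff_isReduced {α : Type*} {w : List (α × Bool)} :
    IsReducedWord w ↔ FreeGroup.IsReduced w := by
  refine List.IsChain.iff fun a b => ?_
  cases a.2 <;> cases b.2 <;> simp

namespace List

variable {α : Type*}

theorem head?_flatten_ofFn {k : ℕ} (hk : 0 < k) (f : Fin k → List α) (hf : ∀ j, f j ≠ []) :
    (ofFn f).flatten.head? = (f ⟨0, hk⟩).head? := by
  obtain ⟨k, rfl⟩ := Nat.exists_eq_add_of_lt hk
  rw [ofFn_succ, flatten_cons, head?_append_of_ne_nil _ (hf 0)]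
  rfl

theorem getLast?_flatten_ofFn {k : ℕ} (hk : 0 < k) (f : Fin k → List α)
    (hf : ∀ j, f j ≠ []) :
    (ofFn f).flatten.getLast? = (f ⟨k - 1, Nat.sub_one_lt_of_lt hk⟩).getLast? := by
  obtain ⟨k, rfl⟩ := Nat.exists_eq_add_of_lt hk
  rw [ofFn_succ', concat_eq_append, flatten_append, flatten_singleton,
    getLast?_append_of_ne_nil _ (hf (Fin.last _))]
  rfl

end List

namespace GropeFrame

theorem deg_div_two_pos {G : GropeFrame} {m : ℕ} (x : GropeGen G m) : 0 < G.deg x.1 / 2 := by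
  obtain ⟨k, hk, hdeg⟩ := G.branch x.1 x.2.1
  rw [G.deg_eq hdeg]
  omega

end GropeFrame

section Expansion

open GropeFrame

variable {G : GropeFrame} {m n : ℕ}

theorem gropeChild_eq_gropeChild_iff {x y : GropeGen G m} {i j : ℕ} (hi : i < G.deg x.1)
    (hj : j < G.deg y.1) : gropeChild x i hi = gropeChild y j hj ↔ x = y ∧ i = j := by
  simp only [gropeChild, Subtype.ext_iff]
  refine ⟨fun h => ?_, fun ⟨hxy, hij⟩ => by rw [hxy, hij]⟩
  obtain ⟨hxy, hij⟩ := List.append_inj h (x.2.2.trans y.2.2.symm)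
  exact ⟨hxy, List.singleton_inj.1 hij⟩

noncomputable def posLetterExp (G : GropeFrame) {m : ℕ} (x : GropeGen G m) :
    List (GropeGen G (m + 1) × Bool) :=
  letterExp G (x, true)

theorem letterExp_true (x : GropeGen G m) : letterExp G (x, true) = posLetterExp G x :=
  rfl

theorem letterExp_false (x : GropeGen G m) :
    letterExp G (x, false) = FreeGroup.invRev (posLetterExp G x) :=
  rfl

theorem head?_posLetterExp (x : GropeGen G m) :
    (posLetterExp G x).head? =
      some (gropeChild x 0 (by have := deg_div_two_pos x; omega), true) :=
  List.head?_flatten_ofFn (deg_div_two_pos x) _ (fun _ => List.cons_ne_nil _ _)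

theorem getLast?_posLetterExp (x : GropeGen G m) :
    (posLetterExp G x).getLast? =
      some (gropeChild x (2 * (G.deg x.1 / 2) - 1) (by have := deg_div_two_pos x; omega),
        false) := by
  rw [posLetterExp, letterExp, if_pos rfl,
    List.getLast?_flatten_ofFn (deg_div_two_pos x) _ (fun _ => List.cons_ne_nil _ _)]
  simp only [List.getLast?_cons_cons, List.getLast?_singleton, Option.some.injEq,
    Prod.mk.injEq, and_true, true_and, gropeChild_eq_gropeChild_iff]
  have := deg_div_two_pos x
  omega

theorem posLetterExp_ne_nil (x : GropeGen G m) : posLetterExp G x ≠ [] := by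
  simp [← List.head?_eq_none_iff, head?_posLetterExp]

theorem isChain_posLetterExp (x : GropeGen G m) :
    (posLetterExp G x).IsChain (fun p q => p.1 ≠ q.1) := by
  rw [posLetterExp, letterExp, if_pos rfl, List.isChain_flatten (by simp), List.isChain_ofFn]
  refine ⟨by simp [gropeChild_eq_gropeChild_iff], fun j hj => ?_⟩
  simp only [List.getLast?_cons_cons, List.getLast?_singleton, List.head?_cons, Option.mem_def,
    Option.some.injEq, forall_eq', ne_eq, gropeChild_eq_gropeChild_iff, true_and]
  omega

theorem letterExp_ne_nil (a : GropeGen G m × Bool) : letterExp G a ≠ [] := by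
  obtain ⟨x, _ | _⟩ := a
  · simpa [letterExp_false, FreeGroup.invRev] using posLetterExp_ne_nil x
  · exact posLetterExp_ne_nil x

theorem isChain_letterExp (a : GropeGen G m × Bool) :
    (letterExp G a).IsChain (fun p q => p.1 ≠ q.1) := by
  obtain ⟨x, _ | _⟩ := a
  · exact FreeGroup.isChain_invRev (isChain_posLetterExp x)
  · exact isChain_posLetterExp x

/- Either the parents of the two generators differ, or they agree and the last child index `2k - 1`
(resp. `0`) meets the first child index `0` (resp. `2k - 1`). -/
theorem ne_of_mem_getLast?_letterExp_of_mem_head?_letterExp {a b : GropeGen G m × Bool}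
    (hab : a.1 = b.1 → a.2 = b.2) {p q : GropeGen G (m + 1) × Bool}
    (hp : p ∈ (letterExp G a).getLast?) (hq : q ∈ (letterExp G b).head?) : p.1 ≠ q.1 := by
  have := deg_div_two_pos a.1
  have := deg_div_two_pos b.1
  obtain ⟨x, _ | _⟩ := a <;> obtain ⟨y, _ | _⟩ := b <;>
    simp only [letterExp_true, letterExp_false, FreeGroup.head?_invRev,
      FreeGroup.getLast?_invRev, head?_posLetterExp, getLast?_posLetterExp, Option.map_some,
      Option.mem_def, Option.some.injEq] at hp hq <;>
    subst hp hq <;>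
    simp_all [gropeChild_eq_gropeChild_iff] <;>
    omega

theorem isReduced_flatten_map_letterExp {w : List (GropeGen G m × Bool)}
    (hw : FreeGroup.IsReduced w) : FreeGroup.IsReduced (w.map (letterExp G)).flatten := by
  have hchain : (w.map (letterExp G)).flatten.IsChain (fun p q => p.1 ≠ q.1) := by
    have hne : [] ∉ w.map (letterExp G) := fun hmem =>
      let ⟨a, _, ha⟩ := List.mem_map.1 hmem
      letterExp_ne_nil a ha
    rw [List.isChain_flatten hne, List.isChain_map]
    refine ⟨List.forall_mem_map.2 fun a _ => isChain_letterExp a, ?_⟩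
    exact hw.imp fun {_ _} hab _ hp _ hq =>
      ne_of_mem_getLast?_letterExp_of_mem_head?_letterExp hab hp hq
  exact hchain.imp fun {_ _} hpq h => absurd h hpq

theorem mk_posLetterExp (x : GropeGen G m) :
    FreeGroup.mk (posLetterExp G x) = gropeE G m (FreeGroup.of x) := by
  rw [posLetterExp, letterExp, if_pos rfl, FreeGroup.mk_flatten, List.map_ofFn, gropeE,
    FreeGroup.lift_apply_of]
  simp only [FreeGroup.commutatorElement_of_of]
  rfl

theorem mk_letterExp (a : GropeGen G m × Bool) :
    FreeGroup.mk (letterExp G a) = gropeE G m (FreeGroup.mk [a]) := by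
  obtain ⟨x, _ | _⟩ := a
  · rw [letterExp_false, ← FreeGroup.inv_mk, mk_posLetterExp, ← map_inv, FreeGroup.of,
      FreeGroup.inv_mk]
    rfl
  · exact mk_posLetterExp x

theorem mk_flatten_map_letterExp (w : List (GropeGen G m × Bool)) :
    FreeGroup.mk (w.map (letterExp G)).flatten = gropeE G m (FreeGroup.mk w) := by
  induction w with
  | nil => exact (map_one _).symm
  | cons a w ih =>
    rw [List.map_cons, List.flatten_cons, ← FreeGroup.mul_mk, ih, mk_letterExp, ← map_mul,
      FreeGroup.mul_mk, List.singleton_append]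

theorem wordExp_self (w : List (GropeGen G m × Bool)) : wordExp G le_rfl w = w :=
  Nat.leRecOn_self _

theorem wordExp_succ (h : m ≤ n) (w : List (GropeGen G m × Bool)) :
    wordExp G (h.trans n.le_succ) w = ((wordExp G h w).map (letterExp G)).flatten :=
  Nat.leRecOn_succ h _

theorem gropeEle_self (x : FreeGroup (GropeGen G m)) : gropeEle G le_rfl x = x :=
  Nat.leRecOn_self _

theorem gropeEle_succ (h : m ≤ n) (x : FreeGroup (GropeGen G m)) :
    gropeEle G (h.trans n.le_succ) x = gropeE G n (gropeEle G h x) :=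
  Nat.leRecOn_succ h _

theorem isReduced_wordExp (h : m ≤ n) {w : List (GropeGen G m × Bool)}
    (hw : FreeGroup.IsReduced w) : FreeGroup.IsReduced (wordExp G h w) := by
  induction n, h using Nat.le_induction with
  | base => rwa [wordExp_self]
  | succ n hmn ih => rw [wordExp_succ hmn]; exact isReduced_flatten_map_letterExp ih

theorem gropeEle_mk (h : m ≤ n) (w : List (GropeGen G m × Bool)) :
    gropeEle G h (FreeGroup.mk w) = FreeGroup.mk (wordExp G h w) := by
  induction n, h using Nat.le_induction with
  | base => rw [gropeEle_self, wordExp_self]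
  | succ n hmn ih => rw [gropeEle_succ hmn, wordExp_succ hmn, ih, mk_flatten_map_letterExp]

end Expansion

/-- **Lemma 2 (basic2).** For a grope frame `S`, `m ≤ n` and a reduced word
`V ∈ 𝒲(E_n)`, one has `V ∈ F_m` (the element of `F_n` represented by `V` lies in the
image of `e_{m,n}`) if and only if there is a word `W ∈ 𝒲(E_m)` with `e_{m,n}[W] ≡ V`. -/
theorem memF_iff_exists_wordExp (G : GropeFrame) {m n : ℕ} (h : m ≤ n)
    (V : List (GropeGen G n × Bool)) (hV : IsReducedWord V) :
    MemF G m (FreeGroup.mk V) ↔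
      ∃ W : List (GropeGen G m × Bool), wordExp G h W = V := by
  constructor
  · rintro ⟨_, x, hx⟩
    refine ⟨x.toWord, FreeGroup.IsReduced.eq_of_mk_eq ?_ ?_ ?_⟩
    · exact isReduced_wordExp h FreeGroup.isReduced_toWord
    · exact isReducedWord_iff_isReduced.1 hV
    · rwa [← gropeEle_mk, FreeGroup.mk_toWord]
  · rintro ⟨W, rfl⟩
    exact ⟨h, FreeGroup.mk W, gropeEle_mk h W⟩
end

section
/- Let S be a grope frame, m < n, and A, B, C ∈ W(E_n) reduced words (possibly empty) such that ABA⁻CB⁻C⁻ ≠ e in F_n and both A and BA⁻CB⁻C⁻ are reduced words. Then: (4.1) if A ≡ A₀B⁻, then A₀ and BA₀⁻CB⁻C⁻ are reduced, A₀BA₀⁻CB⁻C⁻ = ABA⁻CB⁻C⁻ in F_n, and if in addition A₀BA₀⁻, CB⁻C⁻ ∈ F_m then ABA⁻, CB⁻C⁻ ∈ F_m; (4.2) if B ≡ A⁻B₀, then B₀A⁻CB₀⁻AC⁻ is reduced, B₀A⁻CB₀⁻AC⁻ = ABA⁻CB⁻C⁻ in F_n, and if in addition B₀A⁻, CB₀⁻AC⁻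 ∈ F_m then ABA⁻, CB⁻C⁻ ∈ F_m; (4.3) if A ≡ A₀Z⁻ and B ≡ ZB₀ for non-empty words A₀, B₀ and A₀B₀ is reduced, then A₀B₀ZA₀⁻CB₀⁻Z⁻C⁻ is reduced, A₀B₀ZA₀⁻CB₀⁻Z⁻C⁻ = ABA⁻CB⁻C⁻ in F_n, and if in addition A₀B₀ZA₀⁻, CB₀⁻Z⁻C⁻ ∈ F_m then ABA⁻, CB⁻C⁻ ∈ F_m. -/
open scoped commutatorElement

theorem wordInv_append {α : Type*} (l₁ l₂ : List (α × Bool)) :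
    wordInv (l₁ ++ l₂) = wordInv l₂ ++ wordInv l₁ :=
  FreeGroup.invRev_append

theorem wordInv_wordInv {α : Type*} (l : List (α × Bool)) : wordInv (wordInv l) = l :=
  FreeGroup.invRev_invRev

theorem mk_wordInv {α : Type*} (l : List (α × Bool)) :
    FreeGroup.mk (wordInv l) = (FreeGroup.mk l)⁻¹ :=
  rfl

theorem induction4_general (G : GropeFrame) {m n : ℕ}
    (A B C : List (GropeGen G n × Bool))
    (hAred : IsReducedWord A)
    (hred2 : IsReducedWord (B ++ wordInv A ++ C ++ wordInv B ++ wordInv C)) :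
    -- (4.1)
    (∀ A₀, A = A₀ ++ wordInv B →
      IsReducedWord A₀ ∧
      IsReducedWord (B ++ wordInv A₀ ++ C ++ wordInv B ++ wordInv C) ∧
      FreeGroup.mk (A₀ ++ B ++ wordInv A₀ ++ C ++ wordInv B ++ wordInv C) =
        FreeGroup.mk (A ++ B ++ wordInv A ++ C ++ wordInv B ++ wordInv C) ∧
      (MemF G m (FreeGroup.mk (A₀ ++ B ++ wordInv A₀)) →
        MemF G m (FreeGroup.mk (C ++ wordInv B ++ wordInv C)) →
        MemF G m (FreeGroup.mk (A ++ B ++ wordInv A)) ∧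
        MemF G m (FreeGroup.mk (C ++ wordInv B ++ wordInv C)))) ∧
    -- (4.2)
    (∀ B₀, B = wordInv A ++ B₀ →
      IsReducedWord (B₀ ++ wordInv A ++ C ++ wordInv B₀ ++ A ++ wordInv C) ∧
      FreeGroup.mk (B₀ ++ wordInv A ++ C ++ wordInv B₀ ++ A ++ wordInv C) =
        FreeGroup.mk (A ++ B ++ wordInv A ++ C ++ wordInv B ++ wordInv C) ∧
      (MemF G m (FreeGroup.mk (B₀ ++ wordInv A)) →
        MemF G m (FreeGroup.mk (C ++ wordInv B₀ ++ A ++ wordInv C)) →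
        MemF G m (FreeGroup.mk (A ++ B ++ wordInv A)) ∧
        MemF G m (FreeGroup.mk (C ++ wordInv B ++ wordInv C)))) ∧
    -- (4.3)
    (∀ A₀ B₀ Z, A = A₀ ++ wordInv Z → B = Z ++ B₀ → A₀ ≠ [] → B₀ ≠ [] →
      IsReducedWord (A₀ ++ B₀) →
      IsReducedWord (A₀ ++ B₀ ++ Z ++ wordInv A₀ ++ C ++ wordInv B₀ ++ wordInv Z ++ wordInv C) ∧
      FreeGroup.mk (A₀ ++ B₀ ++ Z ++ wordInv A₀ ++ C ++ wordInv B₀ ++ wordInv Z ++ wordInv C) =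
        FreeGroup.mk (A ++ B ++ wordInv A ++ C ++ wordInv B ++ wordInv C) ∧
      (MemF G m (FreeGroup.mk (A₀ ++ B₀ ++ Z ++ wordInv A₀)) →
        MemF G m (FreeGroup.mk (C ++ wordInv B₀ ++ wordInv Z ++ wordInv C)) →
        MemF G m (FreeGroup.mk (A ++ B ++ wordInv A)) ∧
        MemF G m (FreeGroup.mk (C ++ wordInv B ++ wordInv C)))) := by
  refine ⟨?_, ?_, ?_⟩
  · rintro A₀ rfl
    rw [wordInv_append, wordInv_wordInv] at hred2 ⊢
    refine ⟨hAred.prefix ⟨_, rfl⟩, hred2.infix ⟨B, [], by simp⟩,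
      by simp only [← FreeGroup.mul_mk, mk_wordInv]; group, fun h₁ h₂ => ⟨?_, h₂⟩⟩
    convert h₁ using 1
    simp only [← FreeGroup.mul_mk, mk_wordInv]; group
  · rintro B₀ rfl
    rw [wordInv_append, wordInv_wordInv] at hred2 ⊢
    refine ⟨hred2.infix ⟨wordInv A, [], by simp⟩,
      by simp only [← FreeGroup.mul_mk, mk_wordInv]; group, fun h₁ h₂ => ⟨?_, ?_⟩⟩
    · convert h₁ using 1
      simp only [← FreeGroup.mul_mk, mk_wordInv]; group
    · convert h₂ using 1
      simp only [← FreeGroup.mul_mk, mk_wordInv]; group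
  · rintro A₀ B₀ Z rfl rfl - hB₀ hA₀B₀
    rw [wordInv_append, wordInv_wordInv, wordInv_append] at hred2 ⊢
    refine ⟨?_, by simp only [← FreeGroup.mul_mk, mk_wordInv]; group, fun h₁ h₂ => ⟨?_, ?_⟩⟩
    · simp only [List.append_assoc] at hred2 ⊢
      rw [← List.append_assoc A₀ B₀]
      exact hA₀B₀.append_overlap (hred2.suffix (List.suffix_append _ _)) hB₀
    · convert h₁ using 1
      simp only [← FreeGroup.mul_mk, mk_wordInv]; group
    · convert h₂ using 1
      simp only [← FreeGroup.mul_mk, mk_wordInv]; group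

/-- **Lemma 13 (induction4).** Let `m < n` and let `A, B, C ∈ 𝒲(E_n)` be reduced words
(possibly empty) with `ABA⁻CB⁻C⁻ ≠ e` such that `A` and `BA⁻CB⁻C⁻` are reduced words.
Then (4.1)–(4.3) hold. -/
theorem induction4 (G : GropeFrame) {m n : ℕ} (hmn : m < n)
    (A B C : List (GropeGen G n × Bool))
    (hAred : IsReducedWord A) (hBred : IsReducedWord B) (hCred : IsReducedWord C)
    (hne : FreeGroup.mk (A ++ B ++ wordInv A ++ C ++ wordInv B ++ wordInv C) ≠ 1)
    (hred2 : IsReducedWord (B ++ wordInv A ++ C ++ wordInv B ++ wordInv C)) :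
    -- (4.1)
    (∀ A₀, A = A₀ ++ wordInv B →
      IsReducedWord A₀ ∧
      IsReducedWord (B ++ wordInv A₀ ++ C ++ wordInv B ++ wordInv C) ∧
      FreeGroup.mk (A₀ ++ B ++ wordInv A₀ ++ C ++ wordInv B ++ wordInv C) =
        FreeGroup.mk (A ++ B ++ wordInv A ++ C ++ wordInv B ++ wordInv C) ∧
      (MemF G m (FreeGroup.mk (A₀ ++ B ++ wordInv A₀)) →
        MemF G m (FreeGroup.mk (C ++ wordInv B ++ wordInv C)) →
        MemF G m (FreeGroup.mk (A ++ B ++ wordInv A)) ∧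
        MemF G m (FreeGroup.mk (C ++ wordInv B ++ wordInv C)))) ∧
    -- (4.2)
    (∀ B₀, B = wordInv A ++ B₀ →
      IsReducedWord (B₀ ++ wordInv A ++ C ++ wordInv B₀ ++ A ++ wordInv C) ∧
      FreeGroup.mk (B₀ ++ wordInv A ++ C ++ wordInv B₀ ++ A ++ wordInv C) =
        FreeGroup.mk (A ++ B ++ wordInv A ++ C ++ wordInv B ++ wordInv C) ∧
      (MemF G m (FreeGroup.mk (B₀ ++ wordInv A)) →
        MemF G m (FreeGroup.mk (C ++ wordInv B₀ ++ A ++ wordInv C)) →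
        MemF G m (FreeGroup.mk (A ++ B ++ wordInv A)) ∧
        MemF G m (FreeGroup.mk (C ++ wordInv B ++ wordInv C)))) ∧
    -- (4.3)
    (∀ A₀ B₀ Z, A = A₀ ++ wordInv Z → B = Z ++ B₀ → A₀ ≠ [] → B₀ ≠ [] →
      IsReducedWord (A₀ ++ B₀) →
      IsReducedWord (A₀ ++ B₀ ++ Z ++ wordInv A₀ ++ C ++ wordInv B₀ ++ wordInv Z ++ wordInv C) ∧
      FreeGroup.mk (A₀ ++ B₀ ++ Z ++ wordInv A₀ ++ C ++ wordInv B₀ ++ wordInv Z ++ wordInv C) =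
        FreeGroup.mk (A ++ B ++ wordInv A ++ C ++ wordInv B ++ wordInv C) ∧
      (MemF G m (FreeGroup.mk (A₀ ++ B₀ ++ Z ++ wordInv A₀)) →
        MemF G m (FreeGroup.mk (C ++ wordInv B₀ ++ wordInv Z ++ wordInv C)) →
        MemF G m (FreeGroup.mk (A ++ B ++ wordInv A)) ∧
        MemF G m (FreeGroup.mk (C ++ wordInv B ++ wordInv C)))) :=
  induction4_general G A B C hAred hred2
end
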